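/- arXiv:math/0603126 — 3 statements merged into one kernel-verified Lean document; each statement's English description precedes it below -/
import Mathlib

section
/- Let $0 < \gamma < 1$. For every real number $\tau > 1$, $\int_0^{\tau} e^{\gamma s} \left(1 - e^{-2(\tau - s)}\right)^{-\frac{1+\gamma}{2}} ds \leq \left(\frac{2}{1-\gamma} + \frac{1}{\gamma}\right) \left(1 - e^{-2}\right)^{-\frac{1+\gamma}{2}} e^{\gamma \tau}$. -/
open Real MeasureTheory

/-- Convexity bound: for `0 ≤ u ≤ 1`, `(1 - e⁻²) u ≤ 1 - e^(-2u)`. -/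
lemma aux_convex {u : ℝ} (h0 : 0 ≤ u) (h1 : u ≤ 1) :
    (1 - Real.exp (-2)) * u ≤ 1 - Real.exp (-2 * u) := by
  have hc := convexOn_exp.2 (Set.mem_univ (0:ℝ)) (Set.mem_univ (-2:ℝ))
    (by linarith : (0:ℝ) ≤ 1 - u) h0 (by ring)
  simp only [smul_eq_mul, mul_zero, zero_add, Real.exp_zero, mul_one] at hc
  have : Real.exp (u * -2) = Real.exp (-2 * u) := by ring_nf
  nlinarith [hc]

/-- For `0 < γ < 1` and `τ > 1`,
`∫₀^τ e^(γ s) (1 - e^(-2(τ-s)))^(-(1+γ)/2) ds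
  ≤ (2/(1-γ) + 1/γ) (1 - e^(-2))^(-(1+γ)/2) e^(γ τ)`. -/
theorem stmt_5 (γ : ℝ) (hγ0 : 0 < γ) (hγ1 : γ < 1) (τ : ℝ) (hτ : 1 < τ) :
    ∫ s in (0:ℝ)..τ, Real.exp (γ * s) * (1 - Real.exp (-2 * (τ - s))) ^ (-(1 + γ) / 2)
      ≤ (2 / (1 - γ) + 1 / γ) * (1 - Real.exp (-2)) ^ (-(1 + γ) / 2) * Real.exp (γ * τ) := by
  set p : ℝ := -(1 + γ) / 2 with hp
  have hp_neg : p < 0 := by rw [hp]; linarith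
  have hp_gt : -1 < p := by rw [hp]; linarith
  have hC0 : (0:ℝ) < 1 - Real.exp (-2) := by
    have := Real.exp_lt_one_iff.mpr (by norm_num : (-2:ℝ) < 0); linarith
  set C : ℝ := (1 - Real.exp (-2)) ^ p with hCdef
  have hCpos : 0 < C := Real.rpow_pos_of_pos hC0 p
  set f : ℝ → ℝ := fun s => Real.exp (γ * s) * (1 - Real.exp (-2 * (τ - s))) ^ p with hf
  -- basic positivity of base on [0, τ)
  have hbase : ∀ s : ℝ, s < τ → 0 < 1 - Real.exp (-2 * (τ - s)) := by
    intro s hs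
    have : Real.exp (-2 * (τ - s)) < 1 := Real.exp_lt_one_iff.mpr (by nlinarith)
    linarith
  -- measurability of f
  have hmeas : Measurable f := by
    rw [hf]; fun_prop
  -- Piece 1: integrable on [0, τ-1] by continuity
  have hcont1 : ContinuousOn f (Set.uIcc 0 (τ - 1)) := by
    have huIcc : Set.uIcc (0:ℝ) (τ - 1) = Set.Icc 0 (τ - 1) :=
      Set.uIcc_of_le (by linarith)
    rw [huIcc]
    apply ContinuousOn.mul
    · exact (Real.continuous_exp.comp (continuous_const.mul continuous_id)).continuousOn
    · apply ContinuousOn.rpow_const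
      · exact (continuous_const.sub (Real.continuous_exp.comp
          (continuous_const.mul (continuous_const.sub continuous_id)))).continuousOn
      · intro s hs
        left
        exact ne_of_gt (hbase s (by rcases hs with ⟨_, h2⟩; linarith))
  have hint1 : IntervalIntegrable f volume 0 (τ - 1) :=
    hcont1.intervalIntegrable
  -- Majorant on piece 2
  set g : ℝ → ℝ := fun s => Real.exp (γ * τ) * C * (τ - s) ^ p with hg
  have hintg : IntervalIntegrable g volume (τ - 1) τ := by
    apply IntervalIntegrable.const_mul
    have h1 : IntervalIntegrable (fun x : ℝ => x ^ p) volume 0 1 :=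
      intervalIntegral.intervalIntegrable_rpow' hp_gt
    have := h1.comp_sub_left τ
    simpa using this.symm
  -- pointwise bound on piece 2
  have hbound2 : ∀ s ∈ Set.uIcc (τ - 1) τ, f s ≤ g s := by
    intro s hs
    rw [Set.uIcc_of_le (by linarith)] at hs
    obtain ⟨hs1, hs2⟩ := hs
    set u : ℝ := τ - s with hu
    have hu0 : 0 ≤ u := by simp [hu]; linarith
    have hu1 : u ≤ 1 := by simp [hu]; linarith
    rcases eq_or_lt_of_le hu0 with h0 | h0
    · -- u = 0
      have hτs : τ - s = 0 := by rw [← hu, ← h0]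
      have h1 : (1 : ℝ) - Real.exp (-2 * (τ - s)) = 0 := by rw [hτs]; simp
      show Real.exp (γ * s) * (1 - Real.exp (-2 * (τ - s))) ^ p
        ≤ Real.exp (γ * τ) * C * (τ - s) ^ p
      rw [h1, Real.zero_rpow (ne_of_lt hp_neg), mul_zero]
      exact mul_nonneg (mul_nonneg (Real.exp_pos _).le hCpos.le)
        (Real.rpow_nonneg (by linarith) p)
    · have hkey : (1 - Real.exp (-2)) * u ≤ 1 - Real.exp (-2 * u) := aux_convex hu0 hu1
      have hpos : 0 < (1 - Real.exp (-2)) * u := mul_pos hC0 h0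
      have h1 : (1 - Real.exp (-2 * u)) ^ p ≤ ((1 - Real.exp (-2)) * u) ^ p :=
        Real.rpow_le_rpow_of_nonpos hpos hkey (le_of_lt hp_neg)
      have h2 : ((1 - Real.exp (-2)) * u) ^ p = C * u ^ p := by
        rw [Real.mul_rpow (le_of_lt hC0) hu0]
      have h3 : Real.exp (γ * s) ≤ Real.exp (γ * τ) := by
        apply Real.exp_le_exp.mpr; nlinarith
      show Real.exp (γ * s) * (1 - Real.exp (-2 * u)) ^ p
        ≤ Real.exp (γ * τ) * C * u ^ p
      calc Real.exp (γ * s) * (1 - Real.exp (-2 * u)) ^ p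
          ≤ Real.exp (γ * τ) * (C * u ^ p) := by
            apply mul_le_mul h3 (h1.trans (le_of_eq h2)) _ (le_of_lt (Real.exp_pos _))
            exact Real.rpow_nonneg (by linarith [hbase s (by linarith)]) p
        _ = Real.exp (γ * τ) * C * u ^ p := by ring
  -- integrability on piece 2
  have hint2 : IntervalIntegrable f volume (τ - 1) τ := by
    apply hintg.mono_fun' (hmeas.aestronglyMeasurable.restrict)
    filter_upwards [ae_restrict_mem measurableSet_Ioc] with s hs
    rw [Set.uIoc_of_le (by linarith : τ - 1 ≤ τ)] at hs
    have hmem : s ∈ Set.uIcc (τ - 1) τ := by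
      rw [Set.uIcc_of_le (by linarith)]; exact ⟨le_of_lt hs.1, hs.2⟩
    have hfnn : 0 ≤ f s := by
      apply mul_nonneg (le_of_lt (Real.exp_pos _))
      rcases eq_or_lt_of_le hs.2 with h | h
      · rw [h]; simp [Real.zero_rpow (ne_of_lt hp_neg)]
      · exact Real.rpow_nonneg (le_of_lt (hbase s h)) p
    simpa [Real.norm_eq_abs, abs_of_nonneg hfnn] using hbound2 s hmem
  -- split the integral
  have hsplit : ∫ s in (0:ℝ)..τ, f s =
      (∫ s in (0:ℝ)..(τ - 1), f s) + ∫ s in (τ - 1)..τ, f s :=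
    (intervalIntegral.integral_add_adjacent_intervals hint1 hint2).symm
  -- bound piece 1
  have hb1 : (∫ s in (0:ℝ)..(τ - 1), f s) ≤ C * (Real.exp (γ * τ) / γ) := by
    have hmono : (∫ s in (0:ℝ)..(τ - 1), f s)
        ≤ ∫ s in (0:ℝ)..(τ - 1), C * Real.exp (γ * s) := by
      apply intervalIntegral.integral_mono_on (by linarith) hint1
      · exact (continuous_const.mul (Real.continuous_exp.comp
          (continuous_const.mul continuous_id))).intervalIntegrable _ _
      · intro s hs
        obtain ⟨hs1, hs2⟩ := hs
        show Real.exp (γ * s) * (1 - Real.exp (-2 * (τ - s))) ^ p ≤ C * Real.exp (γ * s)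
        rw [mul_comm C _]
        apply mul_le_mul_of_nonneg_left _ (le_of_lt (Real.exp_pos _))
        apply Real.rpow_le_rpow_of_nonpos hC0 _ (le_of_lt hp_neg)
        have : Real.exp (-2 * (τ - s)) ≤ Real.exp (-2) := by
          apply Real.exp_le_exp.mpr; nlinarith
        linarith
    have hcomp : (∫ s in (0:ℝ)..(τ - 1), Real.exp (γ * s))
        = γ⁻¹ * (Real.exp (γ * (τ - 1)) - 1) := by
      rw [intervalIntegral.integral_comp_mul_left Real.exp (ne_of_gt hγ0)]
      rw [integral_exp]
      simp [smul_eq_mul]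
    rw [intervalIntegral.integral_const_mul, hcomp] at hmono
    refine hmono.trans ?_
    have h1 : Real.exp (γ * (τ - 1)) - 1 ≤ Real.exp (γ * τ) := by
      have := Real.exp_le_exp.mpr (show γ * (τ - 1) ≤ γ * τ by nlinarith)
      linarith
    have := mul_le_mul_of_nonneg_left h1 (le_of_lt (inv_pos.mpr hγ0))
    calc C * (γ⁻¹ * (Real.exp (γ * (τ - 1)) - 1)) ≤ C * (γ⁻¹ * Real.exp (γ * τ)) :=
          mul_le_mul_of_nonneg_left this (le_of_lt hCpos)
      _ = C * (Real.exp (γ * τ) / γ) := by rw [div_eq_inv_mul]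
  -- bound piece 2
  have hgval : (∫ s in (τ - 1)..τ, g s) = Real.exp (γ * τ) * C * (2 / (1 - γ)) := by
    rw [hg]
    rw [intervalIntegral.integral_const_mul]
    congr 1
    have hcs : (∫ s in (τ - 1)..τ, (τ - s) ^ p) = ∫ u in (0:ℝ)..1, u ^ p := by
      have := intervalIntegral.integral_comp_sub_left (fun u : ℝ => u ^ p) τ
        (a := τ - 1) (b := τ)
      simpa using this
    rw [hcs, integral_rpow (Or.inl hp_gt)]
    rw [hp]
    rw [Real.one_rpow, Real.zero_rpow (show p + 1 ≠ 0 by rw [hp]; intro h; linarith)]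
    field_simp
    ring
  have hb2 : (∫ s in (τ - 1)..τ, f s) ≤ Real.exp (γ * τ) * C * (2 / (1 - γ)) := by
    rw [← hgval]
    apply intervalIntegral.integral_mono_on (by linarith) hint2 hintg
    intro s hs
    apply hbound2
    rw [Set.uIcc_of_le (by linarith)]; exact hs
  -- conclude
  calc ∫ s in (0:ℝ)..τ, f s
      ≤ C * (Real.exp (γ * τ) / γ) + Real.exp (γ * τ) * C * (2 / (1 - γ)) := by
        rw [hsplit]; exact add_le_add hb1 hb2
    _ = (2 / (1 - γ) + 1 / γ) * C * Real.exp (γ * τ) := by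
        field_simp
        ring
end

section
/- Let $0 < \gamma < 1$. For every real number $\tau$ with $0 < \tau \leq 1$, $e^{-\tau} \int_0^{\tau} e^{\gamma s} \left(1 - e^{-2(\tau - s)}\right)^{-\frac{1+\gamma}{2}} ds \leq \frac{2}{1-\gamma} \left(1 - e^{-2}\right)^{-\frac{1+\gamma}{2}} \tau^{\frac{1-\gamma}{2}} e^{-(1-\gamma)\tau}$. -/
/-! Convexity of `exp` gives `1 - e^{-2u} ≥ (1 - e^{-2}) u` on `[0, 1]`, so for the negative
exponent `p = -(1+γ)/2` the singular factor is at most `(1 - e^{-2})^p (τ - s)^p`. Bounding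
`e^{γ s}` by `e^{γ τ}` leaves `∫₀^τ (τ - s)^p ds = τ^{p+1}/(p+1)`, which is finite since `p > -1`,
and `p + 1 = (1-γ)/2`. -/

open Real MeasureTheory Set

theorem mul_one_sub_exp_neg_le_one_sub_exp_neg_mul (a : ℝ) {u : ℝ} (hu₀ : 0 ≤ u) (hu₁ : u ≤ 1) :
    (1 - exp (-a)) * u ≤ 1 - exp (-a * u) := by
  have h := convexOn_exp.2 (mem_univ 0) (mem_univ (-a)) (sub_nonneg.2 hu₁) hu₀ (by ring)
  simp only [smul_eq_mul, mul_zero, zero_add, exp_zero, mul_one] at h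
  rw [mul_comm u] at h
  linarith

theorem one_sub_exp_neg_mul_rpow_le {a p u : ℝ} (ha : 0 < a) (hp : p ≤ 0) (hu₀ : 0 < u)
    (hu₁ : u ≤ 1) : (1 - exp (-a * u)) ^ p ≤ (1 - exp (-a)) ^ p * u ^ p := by
  have hc : 0 < 1 - exp (-a) := sub_pos.2 (exp_lt_one_iff.2 (neg_neg_of_pos ha))
  rw [← mul_rpow hc.le hu₀.le]
  exact rpow_le_rpow_of_nonpos (mul_pos hc hu₀)
    (mul_one_sub_exp_neg_le_one_sub_exp_neg_mul a hu₀.le hu₁) hp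

theorem integral_sub_rpow {p : ℝ} (hp : -1 < p) (τ : ℝ) :
    ∫ s in (0 : ℝ)..τ, (τ - s) ^ p = τ ^ (p + 1) / (p + 1) := by
  rw [intervalIntegral.integral_comp_sub_left (fun x => x ^ p), sub_self, sub_zero,
    integral_rpow (Or.inl hp), zero_rpow (by linarith), sub_zero]

theorem intervalIntegrable_sub_rpow {p : ℝ} (hp : -1 < p) (τ : ℝ) :
    IntervalIntegrable (fun s => (τ - s) ^ p) volume 0 τ := by
  simpa using ((intervalIntegral.intervalIntegrable_rpow' (a := 0) (b := τ) hp).comp_sub_left τ).symm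

theorem integral_exp_mul_one_sub_exp_neg_rpow_le {a γ p τ : ℝ} (ha : 0 < a) (hγ : 0 ≤ γ)
    (hp₁ : -1 < p) (hp₀ : p ≤ 0) (hτ₀ : 0 ≤ τ) (hτ₁ : τ ≤ 1) :
    ∫ s in (0 : ℝ)..τ, exp (γ * s) * (1 - exp (-a * (τ - s))) ^ p
      ≤ exp (γ * τ) * (1 - exp (-a)) ^ p * (τ ^ (p + 1) / (p + 1)) := by
  have hbase : ∀ s ∈ Ioo 0 τ, 0 ≤ 1 - exp (-a * (τ - s)) := fun s hs =>
    sub_nonneg.2 (exp_le_one_iff.2 (by nlinarith [hs.2]))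
  rw [← integral_sub_rpow hp₁, ← intervalIntegral.integral_const_mul,
    intervalIntegral.integral_of_le hτ₀, intervalIntegral.integral_of_le hτ₀,
    integral_Ioc_eq_integral_Ioo, integral_Ioc_eq_integral_Ioo]
  refine setIntegral_mono_of_nonneg (fun s hs => ?_) (fun s hs => ?_)
    (((intervalIntegrable_sub_rpow hp₁ τ).const_mul _).1.mono_set Ioo_subset_Ioc_self)
  · have := rpow_nonneg (hbase s hs) p
    positivity
  · rw [mul_assoc]
    exact mul_le_mul (exp_le_exp.2 (by nlinarith [hs.2]))
      (one_sub_exp_neg_mul_rpow_le ha hp₀ (sub_pos.2 hs.2) (by linarith [hs.1]))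
      (rpow_nonneg (hbase s hs) p) (exp_pos _).le

/-- For `0 < γ < 1` and `0 < τ ≤ 1`,
`e^(-τ) ∫₀^τ e^(γ s) (1 - e^(-2(τ-s)))^(-(1+γ)/2) ds
  ≤ (2/(1-γ)) (1 - e^(-2))^(-(1+γ)/2) τ^((1-γ)/2) e^(-(1-γ)τ)`. -/
theorem stmt_6 (γ : ℝ) (hγ0 : 0 < γ) (hγ1 : γ < 1) (τ : ℝ) (hτ0 : 0 < τ) (hτ1 : τ ≤ 1) :
    Real.exp (-τ) *
        ∫ s in (0:ℝ)..τ, Real.exp (γ * s) * (1 - Real.exp (-2 * (τ - s))) ^ (-(1 + γ) / 2)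
      ≤ (2 / (1 - γ)) * (1 - Real.exp (-2)) ^ (-(1 + γ) / 2) * τ ^ ((1 - γ) / 2) *
          Real.exp (-(1 - γ) * τ) := by
  have hbound := integral_exp_mul_one_sub_exp_neg_rpow_le two_pos hγ0.le
    (p := -(1 + γ) / 2) (by linarith) (by linarith) hτ0.le hτ1
  rw [show -(1 + γ) / 2 + 1 = (1 - γ) / 2 by ring] at hbound
  have h1γ : 1 - γ ≠ 0 := by linarith
  calc exp (-τ) * ∫ s in (0:ℝ)..τ, exp (γ * s) * (1 - exp (-2 * (τ - s))) ^ (-(1 + γ) / 2)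
      ≤ exp (-τ) * (exp (γ * τ) * (1 - exp (-2)) ^ (-(1 + γ) / 2) *
          (τ ^ ((1 - γ) / 2) / ((1 - γ) / 2))) :=
        mul_le_mul_of_nonneg_left hbound (exp_pos _).le
    _ = _ := by
        rw [show -(1 - γ) * τ = -τ + γ * τ by ring, exp_add]
        field_simp
end

section
/- Let $0 < \gamma < 1$ and set $c_1 = \left(\frac{2}{1-\gamma} + \frac{1}{\gamma}\right)\left(1 - e^{-2}\right)^{-\frac{1+\gamma}{2}}$. Then for every real number $\tau \geq 0$, $e^{-\tau} \int_0^{\tau} e^{\gamma s} \left(1 - e^{-2(\tau - s)}\right)^{-\frac{1+\gamma}{2}} ds \leq c_1$. -/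
open Real MeasureTheory

set_option maxHeartbeats 1600000 in
/-- For `0 < γ < 1` and `c₁ = (2/(1-γ) + 1/γ)(1 - e^(-2))^(-(1+γ)/2)`, one has
`e^(-τ) ∫₀^τ e^(γ s) (1 - e^(-2(τ-s)))^(-(1+γ)/2) ds ≤ c₁` for every `τ ≥ 0`. -/
theorem stmt_7 (γ : ℝ) (hγ0 : 0 < γ) (hγ1 : γ < 1)
    (c1 : ℝ) (hc1 : c1 = (2 / (1 - γ) + 1 / γ) * (1 - Real.exp (-2)) ^ (-(1 + γ) / 2))
    (τ : ℝ) (hτ : 0 ≤ τ) :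
    Real.exp (-τ) *
        ∫ s in (0:ℝ)..τ, Real.exp (γ * s) * (1 - Real.exp (-2 * (τ - s))) ^ (-(1 + γ) / 2)
      ≤ c1 := by
  have hp1 : (-1:ℝ) < -(1 + γ) / 2 := by linarith
  have hp0 : -(1 + γ) / 2 < 0 := by linarith
  have hE : Real.exp (-2) < 1 := Real.exp_lt_one_iff.mpr (by norm_num)
  have hK0 : (0:ℝ) < 1 - Real.exp (-2) := by linarith
  set K := (1 - Real.exp (-2)) ^ (-(1 + γ) / 2) with hKdef
  have hKpos : 0 < K := Real.rpow_pos_of_pos hK0 _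
  -- key scalar bounds
  have hq : -(1 + γ) / 2 + 1 = (1 - γ) / 2 := by ring
  have h1 : Real.exp (-τ) * (Real.exp (γ * τ) - 1) ≤ 1 := by
    have h := Real.exp_pos (-τ)
    have : Real.exp (-τ) * Real.exp (γ * τ) = Real.exp (-τ + γ * τ) := (Real.exp_add _ _).symm
    have h2 : Real.exp (-τ + γ * τ) ≤ 1 := Real.exp_le_one_iff.mpr (by nlinarith)
    nlinarith
  have h2 : Real.exp (-τ) * Real.exp (γ * τ) * τ ^ ((1 - γ) / 2) ≤ 1 := by
    rcases eq_or_lt_of_le hτ with heq | hpos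
    · rw [← heq]
      rw [Real.zero_rpow (by linarith : (1 - γ) / 2 ≠ 0)]
      simp
    · have hlog : Real.log τ ≤ 2 * τ := by
        have := Real.log_le_sub_one_of_pos hpos
        linarith
      have : τ ^ ((1 - γ) / 2) = Real.exp (((1 - γ) / 2) * Real.log τ) := by
        rw [Real.rpow_def_of_pos hpos]; ring_nf
      rw [this, ← Real.exp_add, ← Real.exp_add]
      apply Real.exp_le_one_iff.mpr
      have hmul : ((1 - γ) / 2) * Real.log τ ≤ ((1 - γ) / 2) * (2 * τ) :=
        mul_le_mul_of_nonneg_left hlog (by linarith)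
      linarith
  set g : ℝ → ℝ := fun s => K * Real.exp (γ * s) + K * Real.exp (γ * τ) * (τ - s) ^ (-(1 + γ) / 2)
    with hg
  -- integrability pieces
  have hexpint : IntervalIntegrable (fun s : ℝ => Real.exp (γ * s)) volume 0 τ :=
    Continuous.intervalIntegrable (by fun_prop) 0 τ
  have hrint : IntervalIntegrable (fun s : ℝ => (τ - s) ^ (-(1 + γ) / 2)) volume 0 τ := by
    have h1 := (intervalIntegral.intervalIntegrable_rpow' (a := 0) (b := τ) hp1).comp_sub_left τ
    have h2 := h1.symm
    simpa using h2
  have hig : IntervalIntegrable g volume 0 τ :=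
    (hexpint.const_mul K).add (hrint.const_mul (K * Real.exp (γ * τ)))
  -- pointwise bound on Ioc 0 τ
  have hfle : ∀ s ∈ Set.Ioc (0:ℝ) τ,
      Real.exp (γ * s) * (1 - Real.exp (-2 * (τ - s))) ^ (-(1 + γ) / 2) ≤ g s := by
    intro s hs
    have hs0 : 0 < s := hs.1
    have hsτ : s ≤ τ := hs.2
    have hu0 : 0 ≤ τ - s := by linarith
    have hgnn : 0 ≤ K * Real.exp (γ * s) := le_of_lt (by positivity)
    have hgnn2 : 0 ≤ K * Real.exp (γ * τ) * (τ - s) ^ (-(1 + γ) / 2) := by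
      have := Real.rpow_nonneg hu0 (-(1 + γ) / 2)
      positivity
    rcases eq_or_lt_of_le hsτ with heq | hlt
    · -- s = τ : integrand is 0
      rw [heq]
      have hz : (1 - Real.exp (-2 * (τ - τ))) ^ (-(1 + γ) / 2) = 0 := by
        rw [sub_self, mul_zero, Real.exp_zero, sub_self,
          Real.zero_rpow (by linarith : -(1 + γ) / 2 ≠ 0)]
      rw [hz, mul_zero]
      have h1 : 0 ≤ (τ - τ : ℝ) ^ (-(1 + γ) / 2) := Real.rpow_nonneg (by linarith) _
      exact add_nonneg (by positivity) (mul_nonneg (by positivity) h1)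
    · set u := τ - s with hu
      have hupos : 0 < u := by simp [hu]; linarith
      rcases le_or_gt u 1 with hle1 | hgt1
      · -- 1 - exp(-2u) ≥ (1 - exp(-2)) * u by convexity of exp
        have hconv := convexOn_exp.2 (Set.mem_univ (0:ℝ)) (Set.mem_univ (-2:ℝ))
          (by linarith : (0:ℝ) ≤ 1 - u) (le_of_lt hupos) (by ring)
        simp only [smul_eq_mul, mul_zero, zero_add, Real.exp_zero, mul_one] at hconv
        have hconv' : Real.exp (-2 * u) ≤ 1 - u + u * Real.exp (-2) := by
          rw [show (-2 : ℝ) * u = u * (-2) by ring]; linarith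
        have hb : (1 - Real.exp (-2)) * u ≤ 1 - Real.exp (-2 * u) := by nlinarith [hconv']
        have hbpos : 0 < (1 - Real.exp (-2)) * u := by positivity
        have h1 : (1 - Real.exp (-2 * u)) ^ (-(1 + γ) / 2)
            ≤ ((1 - Real.exp (-2)) * u) ^ (-(1 + γ) / 2) :=
          Real.rpow_le_rpow_of_nonpos hbpos hb (le_of_lt hp0)
        have h2 : ((1 - Real.exp (-2)) * u) ^ (-(1 + γ) / 2)
            = K * u ^ (-(1 + γ) / 2) := by
          rw [Real.mul_rpow (le_of_lt hK0) (le_of_lt hupos)]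
        have h3 : Real.exp (γ * s) ≤ Real.exp (γ * τ) :=
          Real.exp_le_exp.mpr (by nlinarith)
        calc Real.exp (γ * s) * (1 - Real.exp (-2 * u)) ^ (-(1 + γ) / 2)
            ≤ Real.exp (γ * s) * (K * u ^ (-(1 + γ) / 2)) := by
              rw [← h2]; exact mul_le_mul_of_nonneg_left h1 (le_of_lt (Real.exp_pos _))
          _ ≤ Real.exp (γ * τ) * (K * u ^ (-(1 + γ) / 2)) := by
              have := Real.rpow_nonneg (le_of_lt hupos) (-(1 + γ) / 2)
              apply mul_le_mul_of_nonneg_right h3; positivity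
          _ = K * Real.exp (γ * τ) * u ^ (-(1 + γ) / 2) := by ring
          _ ≤ g s := by simp only [hg, ← hu]; linarith
      · -- u > 1 : 1 - exp(-2u) ≥ 1 - exp(-2)
        have hb : 1 - Real.exp (-2) ≤ 1 - Real.exp (-2 * u) := by
          have : Real.exp (-2 * u) ≤ Real.exp (-2) := Real.exp_le_exp.mpr (by nlinarith)
          linarith
        have h1 : (1 - Real.exp (-2 * u)) ^ (-(1 + γ) / 2) ≤ K :=
          Real.rpow_le_rpow_of_nonpos hK0 hb (le_of_lt hp0)
        calc Real.exp (γ * s) * (1 - Real.exp (-2 * u)) ^ (-(1 + γ) / 2)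
            ≤ Real.exp (γ * s) * K :=
              mul_le_mul_of_nonneg_left h1 (le_of_lt (Real.exp_pos _))
          _ = K * Real.exp (γ * s) := by ring
          _ ≤ g s := by simp only [hg, ← hu]; linarith
  -- monotonicity of the integral
  have hmono : (∫ s in (0:ℝ)..τ,
      Real.exp (γ * s) * (1 - Real.exp (-2 * (τ - s))) ^ (-(1 + γ) / 2))
      ≤ ∫ s in (0:ℝ)..τ, g s := by
    rw [intervalIntegral.integral_of_le hτ, intervalIntegral.integral_of_le hτ]
    apply MeasureTheory.integral_mono_of_nonneg
    · filter_upwards [MeasureTheory.self_mem_ae_restrict measurableSet_Ioc] with s hs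
      have hu0 : 0 ≤ τ - s := by linarith [hs.2]
      have : 0 ≤ 1 - Real.exp (-2 * (τ - s)) := by
        have : Real.exp (-2 * (τ - s)) ≤ 1 := Real.exp_le_one_iff.mpr (by nlinarith)
        linarith
      positivity
    · exact hig.1
    · filter_upwards [MeasureTheory.self_mem_ae_restrict measurableSet_Ioc] with s hs
      exact hfle s hs
  -- compute ∫ g
  have hexp : (∫ s in (0:ℝ)..τ, Real.exp (γ * s)) = γ⁻¹ * (Real.exp (γ * τ) - 1) := by
    rw [intervalIntegral.integral_comp_mul_left (fun x => Real.exp x) (ne_of_gt hγ0)]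
    simp [integral_exp, smul_eq_mul]
  have hrpow : (∫ s in (0:ℝ)..τ, (τ - s) ^ (-(1 + γ) / 2))
      = τ ^ (-(1 + γ) / 2 + 1) / (-(1 + γ) / 2 + 1) := by
    rw [intervalIntegral.integral_comp_sub_left (fun x => x ^ (-(1 + γ) / 2)) τ]
    simp only [sub_self, sub_zero]
    rw [integral_rpow (Or.inl hp1)]
    rw [Real.zero_rpow (by linarith : -(1 + γ) / 2 + 1 ≠ 0)]
    ring
  have hgint : (∫ s in (0:ℝ)..τ, g s)
      = K * (γ⁻¹ * (Real.exp (γ * τ) - 1))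
        + K * Real.exp (γ * τ) * (τ ^ (-(1 + γ) / 2 + 1) / (-(1 + γ) / 2 + 1)) := by
    simp only [hg]
    rw [intervalIntegral.integral_add (hexpint.const_mul K)
      (hrint.const_mul (K * Real.exp (γ * τ)))]
    rw [intervalIntegral.integral_const_mul, intervalIntegral.integral_const_mul, hexp, hrpow]
  -- finish
  have hτrnn : 0 ≤ τ ^ ((1 - γ) / 2) := Real.rpow_nonneg hτ _
  have hexpτ : 0 < Real.exp (-τ) := Real.exp_pos _
  have hexpγτ : 0 < Real.exp (γ * τ) := Real.exp_pos _
  calc Real.exp (-τ) *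
        ∫ s in (0:ℝ)..τ, Real.exp (γ * s) * (1 - Real.exp (-2 * (τ - s))) ^ (-(1 + γ) / 2)
      ≤ Real.exp (-τ) * ∫ s in (0:ℝ)..τ, g s :=
        mul_le_mul_of_nonneg_left hmono (le_of_lt hexpτ)
    _ = K * γ⁻¹ * (Real.exp (-τ) * (Real.exp (γ * τ) - 1))
        + K * (2 / (1 - γ)) * (Real.exp (-τ) * Real.exp (γ * τ) * τ ^ ((1 - γ) / 2)) := by
        have hd : (2:ℝ) / (1 - γ) = ((1 - γ) / 2)⁻¹ := (inv_div _ _).symm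
        rw [hgint, hq, hd]
        ring
    _ ≤ K * γ⁻¹ * 1 + K * (2 / (1 - γ)) * 1 := by
        have hA : 0 ≤ K * γ⁻¹ := mul_nonneg hKpos.le (inv_nonneg.mpr hγ0.le)
        have hB : 0 ≤ K * (2 / (1 - γ)) :=
          mul_nonneg hKpos.le (div_nonneg (by norm_num) (sub_pos.mpr hγ1).le)
        have hone : 1 ≤ Real.exp (γ * τ) := Real.one_le_exp (mul_nonneg hγ0.le hτ)
        have hnn1 : 0 ≤ Real.exp (-τ) * (Real.exp (γ * τ) - 1) :=
          mul_nonneg (Real.exp_pos _).le (sub_nonneg.mpr hone)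
        gcongr
    _ = c1 := by rw [hc1]; ring
end
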